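/- Let N ≥ 4 be even, β ∈ ℝ, ω_k = √(1 + 4 sin²(kπ/N)). Define on ℝ^{2N} the functions: a_k, b_k, c_k, d_k for 1 ≤ k < N/2 (the Hopf variables), a_{N/2} = ½(Q_{N/2}² + P_{N/2}²), a_N = ½(Q_N² + P_N²), the differences b_k − b_{N/2−k} for 1 ≤ k < N/4, the function c_{N/4} when 4 divides N, and the quartics K_k = 3 (c_k c_{N/2−k} − d_k d_{N/2−k})/(ω_k ω_{N/2−k}) − (3/4)(b_k²/ω_k² + b_{N/2−k}²/ω_{N/2−k}²) for 1 ≤ k < N/4. Let H̄ = H₂ + H̄₄ with H₂ = Σ_{k=1}^N (ω_k/2)(Q_k² + P_k²) and H̄₄ = (β/(2N)) [ (3/2)(a_{N/2}²/ω_{N/2}² + a_N²/ω_N²) + 6 a_{N/2} a_N/(ω_{N/2} ω_N) + 6 (a_{N/2}/ω_{N/2} + a_N/ω_N) Σ_{1≤k<N/2} a_k/ω_k + (3/4) Σ_{1≤k<N/2} (3a_k² − b_k²)/ω_k² + 6 Σ_{1≤k<l<N/2} a_k a_l/(ω_k ω_l) + 3 Σ_{1≤k<N/4} (c_k c_{N/2−k}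 − d_k d_{N/2−k})/(ω_k ω_{N/2−k}) + (3/4)(c_{N/4}² − d_{N/4}²)/ω_{N/4}² ], where the terms with subscript N/4 appear only when 4 divides N. Then the functions a_k (1 ≤ k < N/2), a_{N/2}, a_N, b_k − b_{N/2−k} (1 ≤ k < N/4), c_{N/4} (if 4 | N), and K_k (1 ≤ k < N/4) pairwise Poisson-commute and each Poisson-commutes with H̄. -/

import Mathlib

noncomputable section

open Finset

/-- The Poisson bracket on `ℝ^{2N}` with coordinates `(Q, P)`:
`{f,g} = Σ_k (∂f/∂Q_k ∂g/∂P_k − ∂f/∂P_k ∂g/∂Q_k)`. -/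
def pb {N : ℕ} (f g : ((Fin N → ℝ) × (Fin N → ℝ)) → ℝ)
    (x : (Fin N → ℝ) × (Fin N → ℝ)) : ℝ :=
  ∑ k : Fin N,
    (fderiv ℝ f x (Pi.single k (1 : ℝ), 0) * fderiv ℝ g x (0, Pi.single k (1 : ℝ))
      - fderiv ℝ f x (0, Pi.single k (1 : ℝ)) * fderiv ℝ g x (Pi.single k (1 : ℝ), 0))

/-- The coordinate with (1-based) label `j` is the component `(j−1) mod N` of `Fin N`. -/
def co (N : ℕ) (hN : 0 < N) (j : ℕ) : Fin N := ⟨(j - 1) % N, Nat.mod_lt _ hN⟩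

/-- Hopf variable `a_k = ½(Q_k² + P_k² + Q_{N−k}² + P_{N−k}²)`. -/
def aH (N : ℕ) (hN : 0 < N) (k : ℕ) (x : (Fin N → ℝ) × (Fin N → ℝ)) : ℝ :=
  (x.1 (co N hN k) ^ 2 + x.2 (co N hN k) ^ 2
    + x.1 (co N hN (N - k)) ^ 2 + x.2 (co N hN (N - k)) ^ 2) / 2

/-- Hopf variable `b_k = Q_k P_{N−k} − Q_{N−k} P_k`. -/
def bH (N : ℕ) (hN : 0 < N) (k : ℕ) (x : (Fin N → ℝ) × (Fin N → ℝ)) : ℝ :=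
  x.1 (co N hN k) * x.2 (co N hN (N - k)) - x.1 (co N hN (N - k)) * x.2 (co N hN k)

/-- Hopf variable `c_k = ½(Q_k² + P_k² − Q_{N−k}² − P_{N−k}²)`. -/
def cH (N : ℕ) (hN : 0 < N) (k : ℕ) (x : (Fin N → ℝ) × (Fin N → ℝ)) : ℝ :=
  (x.1 (co N hN k) ^ 2 + x.2 (co N hN k) ^ 2
    - x.1 (co N hN (N - k)) ^ 2 - x.2 (co N hN (N - k)) ^ 2) / 2

/-- Hopf variable `d_k = Q_k Q_{N−k} + P_k P_{N−k}`. -/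
def dH (N : ℕ) (hN : 0 < N) (k : ℕ) (x : (Fin N → ℝ) × (Fin N → ℝ)) : ℝ :=
  x.1 (co N hN k) * x.1 (co N hN (N - k)) + x.2 (co N hN k) * x.2 (co N hN (N - k))

/-- `a_N = ½(Q_N² + P_N²)`. -/
def aNf (N : ℕ) (hN : 0 < N) (x : (Fin N → ℝ) × (Fin N → ℝ)) : ℝ :=
  (x.1 (co N hN N) ^ 2 + x.2 (co N hN N) ^ 2) / 2

/-- `a_{N/2} = ½(Q_{N/2}² + P_{N/2}²)` (for `N` even). -/
def aHalf (N : ℕ) (hN : 0 < N) (x : (Fin N → ℝ) × (Fin N → ℝ)) : ℝ :=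
  (x.1 (co N hN (N / 2)) ^ 2 + x.2 (co N hN (N / 2)) ^ 2) / 2

/-- The normal-mode frequencies `ω_k = √(1 + 4 sin²(kπ/N))`
(note `ω_{N/2} = √5` and `ω_N = 1`). -/
def omg (N k : ℕ) : ℝ := Real.sqrt (1 + 4 * Real.sin (k * Real.pi / N) ^ 2)

/-- The quartic integrals
`K_k = 3(c_k c_{N/2−k} − d_k d_{N/2−k})/(ω_k ω_{N/2−k}) − (3/4)(b_k²/ω_k² + b_{N/2−k}²/ω_{N/2−k}²)`. -/
def Kquart (N : ℕ) (hN : 0 < N) (k : ℕ) (x : (Fin N → ℝ) × (Fin N → ℝ)) : ℝ :=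
  3 * (cH N hN k x * cH N hN (N / 2 - k) x - dH N hN k x * dH N hN (N / 2 - k) x)
      / (omg N k * omg N (N / 2 - k))
    - (3 / 4) * (bH N hN k x ^ 2 / omg N k ^ 2
      + bH N hN (N / 2 - k) x ^ 2 / omg N (N / 2 - k) ^ 2)

/-- The quadratic part `H₂ = Σ_{k=1}^N (ω_k/2)(Q_k² + P_k²)`. -/
def H2KG (N : ℕ) (hN : 0 < N) (x : (Fin N → ℝ) × (Fin N → ℝ)) : ℝ :=
  ∑ k ∈ Finset.Icc 1 N, omg N k / 2 * (x.1 (co N hN k) ^ 2 + x.2 (co N hN k) ^ 2)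

/-- The fourth order part `H̄₄` of the normal form of the periodic KG lattice, `N` even
(the terms with subscript `N/4` are present only when `4 ∣ N`). -/
def H4even (N : ℕ) (hN : 0 < N) (β : ℝ) (x : (Fin N → ℝ) × (Fin N → ℝ)) : ℝ :=
  β / (2 * N) *
    ((3 / 2) * (aHalf N hN x ^ 2 / omg N (N / 2) ^ 2 + aNf N hN x ^ 2 / omg N N ^ 2)
      + 6 * aHalf N hN x * aNf N hN x / (omg N (N / 2) * omg N N)
      + 6 * (aHalf N hN x / omg N (N / 2) + aNf N hN x / omg N N) *
          ∑ k ∈ Finset.Ico 1 (N / 2), aH N hN k x / omg N k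
      + (3 / 4) * ∑ k ∈ Finset.Ico 1 (N / 2),
          (3 * aH N hN k x ^ 2 - bH N hN k x ^ 2) / omg N k ^ 2
      + 6 * ∑ k ∈ Finset.Ico 1 (N / 2), ∑ l ∈ Finset.Ico (k + 1) (N / 2),
          aH N hN k x * aH N hN l x / (omg N k * omg N l)
      + 3 * ∑ k ∈ (Finset.Ico 1 (N / 2)).filter (fun k => 4 * k < N),
          (cH N hN k x * cH N hN (N / 2 - k) x - dH N hN k x * dH N hN (N / 2 - k) x)
            / (omg N k * omg N (N / 2 - k))
      + (if N % 4 = 0 then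
          (3 / 4) * (cH N hN (N / 4) x ^ 2 - dH N hN (N / 4) x ^ 2) / omg N (N / 4) ^ 2
        else 0))

/-- The family of first integrals of the truncated normal form, `N` even:
`a_k` (`1 ≤ k < N/2`), `a_{N/2}`, `a_N`, `b_k − b_{N/2−k}` (`1 ≤ k < N/4`),
`c_{N/4}` (when `4 ∣ N`), and the quartics `K_k` (`1 ≤ k < N/4`). -/
def evenFam (N : ℕ) (hN : 0 < N) : Set (((Fin N → ℝ) × (Fin N → ℝ)) → ℝ) :=
  {f | (∃ k, 1 ≤ k ∧ 2 * k < N ∧ f = aH N hN k) ∨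
    f = aHalf N hN ∨ f = aNf N hN ∨
    (∃ k, 1 ≤ k ∧ 4 * k < N ∧ f = fun x => bH N hN k x - bH N hN (N / 2 - k) x) ∨
    (N % 4 = 0 ∧ f = cH N hN (N / 4)) ∨
    (∃ k, 1 ≤ k ∧ 4 * k < N ∧ f = Kquart N hN k)}

/-!
Functions of disjoint sets of sites Poisson-commute, and the Hopf variables of the modes `k` and
`N - k` are functions of the two sites of that pair, on which `b, c, d` satisfy the `su(2)`
relations `{b, c} = 2d`, `{b, d} = -2c` and `a` is their Casimir. Hence the actions `a_k`,
`a_{N/2}`, `a_N` commute with every Hopf variable, so with the algebra the Hopf variables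
generate, which contains the whole family. The other members `b_k - b_{N/2-k}`, `K_k` and
`c_{N/4}` live on pairwise disjoint blocks of sites, except that `b_k - b_{N/2-k}` and `K_k`
share one.

As for `H̄`: `H₂ = Σ_{k<N/2} ω_k a_k + ω_{N/2} a_{N/2} + ω_N a_N` because `ω_{N-k} = ω_k`;
in `H̄₄` the `b_k²` terms combine with the `c c - d d` terms into the `K_k`, and the `N/4` term
equals `(3/4)(2 c_{N/4}² - a_{N/4}²)/ω_{N/4}²` because `a² = b² + c² + d²`. So `H̄` lies in
the algebra generated by the family, and commutes with each member by the Leibniz rule.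
-/

namespace KGLattice

open Finset

variable {N : ℕ}

abbrev PhaseSpace (N : ℕ) := (Fin N → ℝ) × (Fin N → ℝ)

section PoissonCalculus

variable {f g h : PhaseSpace N → ℝ} {x : PhaseSpace N}

theorem pb_antisymm (f g : PhaseSpace N → ℝ) (x : PhaseSpace N) : pb f g x = -pb g f x := by
  rw [pb, pb, ← sum_neg_distrib]
  exact sum_congr rfl fun k _ => by ring

theorem pb_self (f : PhaseSpace N → ℝ) (x : PhaseSpace N) : pb f f x = 0 := by
  linarith [pb_antisymm f f x]

theorem pb_add_right (hg : DifferentiableAt ℝ g x) (hh : DifferentiableAt ℝ h x) :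
    pb f (fun y => g y + h y) x = pb f g x + pb f h x := by
  simp only [pb, fderiv_fun_add hg hh, add_apply, ← sum_add_distrib]
  exact sum_congr rfl fun k _ => by ring

theorem pb_sub_right (hg : DifferentiableAt ℝ g x) (hh : DifferentiableAt ℝ h x) :
    pb f (fun y => g y - h y) x = pb f g x - pb f h x := by
  simp only [pb, fderiv_fun_sub hg hh, sub_apply, ← sum_sub_distrib]
  exact sum_congr rfl fun k _ => by ring

theorem pb_mul_right (hg : DifferentiableAt ℝ g x) (hh : DifferentiableAt ℝ h x) :
    pb f (fun y => g y * h y) x = g x * pb f h x + h x * pb f g x := by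
  simp only [pb, fderiv_fun_mul hg hh, add_apply,
    smul_apply, smul_eq_mul, mul_sum, ← sum_add_distrib]
  exact sum_congr rfl fun k _ => by ring

theorem pb_const_right (f : PhaseSpace N → ℝ) (c : ℝ) (x : PhaseSpace N) :
    pb f (fun _ => c) x = 0 := by
  simp [pb]

theorem pb_const_mul_right (c : ℝ) (hg : DifferentiableAt ℝ g x) :
    pb f (fun y => c * g y) x = c * pb f g x := by
  rw [pb_mul_right (differentiableAt_const c) hg, pb_const_right]; ring

theorem pb_div_const_right (c : ℝ) (hg : DifferentiableAt ℝ g x) :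
    pb f (fun y => g y / c) x = pb f g x / c := by
  simp_rw [div_eq_inv_mul, pb_const_mul_right _ hg]

theorem pb_sq_right (hg : DifferentiableAt ℝ g x) :
    pb f (fun y => g y ^ 2) x = 2 * g x * pb f g x := by
  simp_rw [sq, pb_mul_right hg hg]; ring

theorem pb_add_left (hg : DifferentiableAt ℝ g x) (hh : DifferentiableAt ℝ h x) :
    pb (fun y => g y + h y) f x = pb g f x + pb h f x := by
  rw [pb_antisymm, pb_add_right hg hh, pb_antisymm f g, pb_antisymm f h]; ring

theorem pb_sub_left (hg : DifferentiableAt ℝ g x) (hh : DifferentiableAt ℝ h x) :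
    pb (fun y => g y - h y) f x = pb g f x - pb h f x := by
  rw [pb_antisymm, pb_sub_right hg hh, pb_antisymm f g, pb_antisymm f h]; ring

theorem pb_mul_left (hg : DifferentiableAt ℝ g x) (hh : DifferentiableAt ℝ h x) :
    pb (fun y => g y * h y) f x = g x * pb h f x + h x * pb g f x := by
  rw [pb_antisymm, pb_mul_right hg hh, pb_antisymm f g, pb_antisymm f h]; ring

theorem pb_div_const_left (c : ℝ) (hg : DifferentiableAt ℝ g x) :
    pb (fun y => g y / c) f x = pb g f x / c := by
  rw [pb_antisymm, pb_div_const_right c hg, pb_antisymm f g]; ring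

theorem pb_sq_left (hg : DifferentiableAt ℝ g x) :
    pb (fun y => g y ^ 2) f x = 2 * g x * pb g f x := by
  rw [pb_antisymm, pb_sq_right hg, pb_antisymm f g]; ring

theorem fderiv_fst_apply (i : Fin N) (x v : PhaseSpace N) :
    fderiv ℝ (fun y : PhaseSpace N => y.1 i) x v = v.1 i := by
  rw [show (fun y : PhaseSpace N => y.1 i) =
    ContinuousLinearMap.proj (R := ℝ) i ∘L ContinuousLinearMap.fst ℝ _ _ from rfl,
    ContinuousLinearMap.fderiv]
  rfl

theorem fderiv_snd_apply (i : Fin N) (x v : PhaseSpace N) :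
    fderiv ℝ (fun y : PhaseSpace N => y.2 i) x v = v.2 i := by
  rw [show (fun y : PhaseSpace N => y.2 i) =
    ContinuousLinearMap.proj (R := ℝ) i ∘L ContinuousLinearMap.snd ℝ _ _ from rfl,
    ContinuousLinearMap.fderiv]
  rfl

theorem pb_fst_fst (i j : Fin N) (x : PhaseSpace N) :
    pb (fun y => y.1 i) (fun y => y.1 j) x = 0 := by
  simp [pb, fderiv_fst_apply]

theorem pb_snd_snd (i j : Fin N) (x : PhaseSpace N) :
    pb (fun y => y.2 i) (fun y => y.2 j) x = 0 := by
  simp [pb, fderiv_snd_apply]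

theorem pb_fst_snd (i j : Fin N) (x : PhaseSpace N) :
    pb (fun y => y.1 i) (fun y => y.2 j) x = if i = j then 1 else 0 := by
  simp [pb, fderiv_fst_apply, fderiv_snd_apply, Pi.single_apply]

theorem pb_snd_fst (i j : Fin N) (x : PhaseSpace N) :
    pb (fun y => y.2 i) (fun y => y.1 j) x = -if i = j then 1 else 0 := by
  rw [pb_antisymm, pb_fst_snd]
  simp only [eq_comm]

end PoissonCalculus

section Support

def DependsOnSites (f : PhaseSpace N → ℝ) (s : Set (Fin N)) : Prop :=
  ∀ ⦃x y : PhaseSpace N⦄, (∀ i ∈ s, x.1 i = y.1 i ∧ x.2 i = y.2 i) → f x = f y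

variable {f g : PhaseSpace N → ℝ} {s t : Set (Fin N)} {x : PhaseSpace N}

theorem DependsOnSites.fderiv_eq_zero (hs : DependsOnSites f s) (hf : DifferentiableAt ℝ f x)
    {v : PhaseSpace N} (hv : ∀ i ∈ s, v.1 i = 0 ∧ v.2 i = 0) : fderiv ℝ f x v = 0 := by
  have hline : (fun t : ℝ => f (x + t • v)) = fun _ => f x :=
    funext fun t => hs fun i hi => by simp [(hv i hi).1, (hv i hi).2]
  rw [← hf.lineDeriv_eq_fderiv, lineDeriv, hline, deriv_const]

theorem DependsOnSites.fderiv_single_eq_zero (hs : DependsOnSites f s)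
    (hf : DifferentiableAt ℝ f x) {k : Fin N} (hk : k ∉ s) :
    fderiv ℝ f x (Pi.single k 1, 0) = 0 ∧ fderiv ℝ f x (0, Pi.single k 1) = 0 := by
  have hv : ∀ i ∈ s, (Pi.single k (1 : ℝ) : Fin N → ℝ) i = 0 :=
    fun i hi => Pi.single_eq_of_ne (ne_of_mem_of_not_mem hi hk) 1
  exact ⟨hs.fderiv_eq_zero hf fun i hi => ⟨hv i hi, rfl⟩,
    hs.fderiv_eq_zero hf fun i hi => ⟨rfl, hv i hi⟩⟩

theorem pb_eq_zero_of_disjoint (hfs : DependsOnSites f s) (hgt : DependsOnSites g t)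
    (hst : Disjoint s t) (hf : DifferentiableAt ℝ f x) (hg : DifferentiableAt ℝ g x) :
    pb f g x = 0 := by
  refine sum_eq_zero fun k _ => ?_
  by_cases hk : k ∈ s
  · obtain ⟨h₁, h₂⟩ := hgt.fderiv_single_eq_zero hg (Set.disjoint_left.1 hst hk)
    rw [h₁, h₂]; ring
  · obtain ⟨h₁, h₂⟩ := hfs.fderiv_single_eq_zero hf hk
    rw [h₁, h₂]; ring

end Support

theorem injOn_co (hN : 0 < N) : Set.InjOn (co N hN) (Set.Icc 1 N) := by
  intro a ha b hb h
  simp only [co, Fin.mk.injEq, Set.mem_Icc] at h ha hb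
  rw [Nat.mod_eq_of_lt (by omega), Nat.mod_eq_of_lt (by omega)] at h
  omega

theorem co_ne_co_sub (hN : 0 < N) {k : ℕ} (hk : 1 ≤ k) (hkN : 2 * k < N) :
    co N hN k ≠ co N hN (N - k) :=
  fun h => by have := injOn_co hN (by simp; omega) (by simp; omega) h; omega

theorem sum_Ico_one_fold {M : Type*} [AddCommMonoid M] (F : ℕ → M) {n : ℕ} (hn : 0 < n) :
    ∑ k ∈ Ico 1 n, F k =
      ∑ k ∈ Ico 1 ((n + 1) / 2), (F k + F (n - k)) + if Even n then F (n / 2) else 0 := by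
  rw [sum_add_distrib, sum_Ico_reflect F 1 (by omega : (n + 1) / 2 ≤ n + 1), add_assoc,
    ← sum_Ico_consecutive F (by omega : 1 ≤ (n + 1) / 2) (by omega : (n + 1) / 2 ≤ n)]
  congr 1
  split_ifs with h
  · obtain ⟨m, rfl⟩ := h
    rw [show (m + m + 1) / 2 = m by omega, show (m + m) / 2 = m by omega,
      show m + m + 1 - m = m + 1 by omega, show m + m + 1 - 1 = m + m by omega,
      sum_eq_sum_Ico_succ_bot (by omega : m < m + m), add_comm]
  · obtain ⟨m, rfl⟩ := Nat.not_even_iff_odd.1 h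
    rw [show (2 * m + 1 + 1) / 2 = m + 1 by omega, show 2 * m + 1 + 1 - (m + 1) = m + 1 by omega,
      add_tsub_cancel_right, add_zero]

theorem omg_sub {N k : ℕ} (hk : k ≤ N) : omg N (N - k) = omg N k := by
  rcases Nat.eq_zero_or_pos N with rfl | hN
  · rw [Nat.le_zero.1 hk]
  have hN' : (N : ℝ) ≠ 0 := by positivity
  have harg : ((N - k : ℕ) : ℝ) * Real.pi / N = Real.pi - k * Real.pi / N := by
    rw [Nat.cast_sub hk]; field_simp
  rw [omg, omg, harg, Real.sin_pi_sub]

section Hopf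

variable (hN : 0 < N) (k : ℕ) {x : PhaseSpace N}

@[fun_prop] theorem differentiable_aH : Differentiable ℝ (aH N hN k) := by unfold aH; fun_prop
@[fun_prop] theorem differentiable_bH : Differentiable ℝ (bH N hN k) := by unfold bH; fun_prop
@[fun_prop] theorem differentiable_cH : Differentiable ℝ (cH N hN k) := by unfold cH; fun_prop
@[fun_prop] theorem differentiable_dH : Differentiable ℝ (dH N hN k) := by unfold dH; fun_prop
@[fun_prop] theorem differentiable_aHalf : Differentiable ℝ (aHalf N hN) := by
  unfold aHalf; fun_prop
@[fun_prop] theorem differentiable_aNf : Differentiable ℝ (aNf N hN) := by unfold aNf; fun_prop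
@[fun_prop] theorem differentiable_Kquart : Differentiable ℝ (Kquart N hN k) := by
  unfold Kquart; fun_prop

def pairFns : Set (PhaseSpace N → ℝ) := {aH N hN k, bH N hN k, cH N hN k, dH N hN k}

theorem aH_mem_pairFns : aH N hN k ∈ pairFns hN k := by simp [pairFns]
theorem bH_mem_pairFns : bH N hN k ∈ pairFns hN k := by simp [pairFns]
theorem cH_mem_pairFns : cH N hN k ∈ pairFns hN k := by simp [pairFns]
theorem dH_mem_pairFns : dH N hN k ∈ pairFns hN k := by simp [pairFns]

theorem differentiable_of_mem_pairFns {g : PhaseSpace N → ℝ} (hg : g ∈ pairFns hN k) :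
    Differentiable ℝ g := by
  rcases hg with rfl | rfl | rfl | rfl <;> fun_prop

theorem dependsOnSites_of_mem_pairFns {g : PhaseSpace N → ℝ} (hg : g ∈ pairFns hN k) :
    DependsOnSites g (co N hN '' {k, N - k}) := by
  intro x y h
  obtain ⟨h₁, h₂⟩ := h _ (Set.mem_image_of_mem _ (Set.mem_insert k _))
  obtain ⟨h₃, h₄⟩ := h _ (Set.mem_image_of_mem _ (Set.mem_insert_of_mem k rfl))
  rcases hg with rfl | rfl | rfl | rfl <;> simp only [aH, bH, cH, dH, h₁, h₂, h₃, h₄]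

theorem dependsOnSites_aHalf : DependsOnSites (aHalf N hN) (co N hN '' {N / 2}) := by
  intro x y h
  obtain ⟨h₁, h₂⟩ := h _ (Set.mem_image_of_mem _ rfl)
  simp only [aHalf, h₁, h₂]

theorem dependsOnSites_aNf : DependsOnSites (aNf N hN) (co N hN '' {N}) := by
  intro x y h
  obtain ⟨h₁, h₂⟩ := h _ (Set.mem_image_of_mem _ rfl)
  simp only [aNf, h₁, h₂]

theorem dependsOnSites_Kquart :
    DependsOnSites (Kquart N hN k) (co N hN '' ({k, N - k} ∪ {N / 2 - k, N - (N / 2 - k)})) := by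
  intro x y h
  rw [Set.image_union] at h
  have h₁ : ∀ g ∈ pairFns hN k, g x = g y := fun g hg =>
    dependsOnSites_of_mem_pairFns hN k hg fun i hi => h i (Or.inl hi)
  have h₂ : ∀ g ∈ pairFns hN (N / 2 - k), g x = g y := fun g hg =>
    dependsOnSites_of_mem_pairFns hN _ hg fun i hi => h i (Or.inr hi)
  simp only [Kquart, h₁ _ (bH_mem_pairFns hN k), h₁ _ (cH_mem_pairFns hN k),
    h₁ _ (dH_mem_pairFns hN k), h₂ _ (bH_mem_pairFns hN _), h₂ _ (cH_mem_pairFns hN _),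
    h₂ _ (dH_mem_pairFns hN _)]

theorem pb_aH_of_mem_pairFns {g : PhaseSpace N → ℝ} (hg : g ∈ pairFns hN k) :
    pb (aH N hN k) g x = 0 := by
  rcases hg with rfl | rfl | rfl | rfl
  · exact pb_self _ _
  all_goals
    delta aH bH cH dH
    simp (disch := fun_prop) only [pb_add_left, pb_div_const_left, pb_sq_left, pb_add_right,
      pb_sub_right, pb_mul_right, pb_sq_right, pb_div_const_right, pb_fst_fst, pb_snd_snd,
      pb_fst_snd, pb_snd_fst]
    by_cases h : co N hN k = co N hN (N - k)
    · simp [h] <;> ring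
    · simp [h, Ne.symm h]; ring

theorem pb_bH_cH (hk : co N hN k ≠ co N hN (N - k)) :
    pb (bH N hN k) (cH N hN k) x = 2 * dH N hN k x := by
  unfold bH cH dH
  simp (disch := fun_prop) only [pb_sub_left, pb_mul_left, pb_sub_right, pb_add_right,
    pb_sq_right, pb_div_const_right, pb_fst_fst, pb_snd_snd, pb_fst_snd, pb_snd_fst]
  simp [hk, Ne.symm hk]; ring

theorem pb_bH_dH (hk : co N hN k ≠ co N hN (N - k)) :
    pb (bH N hN k) (dH N hN k) x = -(2 * cH N hN k x) := by
  unfold bH cH dH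
  simp (disch := fun_prop) only [pb_sub_left, pb_mul_left, pb_add_right, pb_mul_right,
    pb_fst_fst, pb_snd_snd, pb_fst_snd, pb_snd_fst]
  simp [hk, Ne.symm hk]; ring

theorem aH_sq : aH N hN k x ^ 2 = bH N hN k x ^ 2 + cH N hN k x ^ 2 + dH N hN k x ^ 2 := by
  simp only [aH, bH, cH, dH]; ring

end Hopf

theorem pb_eq_zero_of_disjoint_modes (hN : 0 < N) {f g : PhaseSpace N → ℝ} {L M : Set ℕ}
    (hfL : DependsOnSites f (co N hN '' L)) (hgM : DependsOnSites g (co N hN '' M))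
    (hLM : ∀ a ∈ L, ∀ b ∈ M, 1 ≤ a ∧ a ≤ N ∧ 1 ≤ b ∧ b ≤ N ∧ a ≠ b)
    (hf : Differentiable ℝ f) (hg : Differentiable ℝ g) (x : PhaseSpace N) : pb f g x = 0 := by
  refine pb_eq_zero_of_disjoint hfL hgM (Set.disjoint_left.2 ?_) (hf x) (hg x)
  rintro _ ⟨a, ha, rfl⟩ ⟨b, hb, hab⟩
  obtain ⟨ha1, haN, hb1, hbN, hne⟩ := hLM a ha b hb
  exact hne (injOn_co hN ⟨hb1, hbN⟩ ⟨ha1, haN⟩ hab).symm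

theorem pb_eq_zero_of_mem_pairFns (hN : 0 < N) {k m : ℕ} {g h : PhaseSpace N → ℝ}
    (hg : g ∈ pairFns hN k) (hh : h ∈ pairFns hN m) (hk : 1 ≤ k ∧ 2 * k < N)
    (hm : 1 ≤ m ∧ 2 * m < N) (hkm : k ≠ m) (x : PhaseSpace N) : pb g h x = 0 :=
  pb_eq_zero_of_disjoint_modes hN (dependsOnSites_of_mem_pairFns hN k hg)
    (dependsOnSites_of_mem_pairFns hN m hh) (by simp; omega)
    (differentiable_of_mem_pairFns hN k hg) (differentiable_of_mem_pairFns hN m hh) x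

-- Differentiability is part of membership so that the Leibniz rule applies.
def poissonCommutant (f : PhaseSpace N → ℝ) : Subalgebra ℝ (PhaseSpace N → ℝ) where
  carrier := {g | Differentiable ℝ g ∧ ∀ x, pb f g x = 0}
  mul_mem' {g h} hg hh := ⟨hg.1.mul hh.1, fun x => by
    rw [show g * h = fun y => g y * h y from rfl, pb_mul_right (hg.1 x) (hh.1 x), hg.2, hh.2]
    ring⟩
  add_mem' {g h} hg hh := ⟨hg.1.add hh.1, fun x => by
    rw [show g + h = fun y => g y + h y from rfl, pb_add_right (hg.1 x) (hh.1 x), hg.2, hh.2]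
    ring⟩
  algebraMap_mem' c := ⟨differentiable_const c, pb_const_right f c⟩

variable (hN : 0 < N)

def hopfGenerators : Set (PhaseSpace N → ℝ) :=
  {g | g = aHalf N hN ∨ g = aNf N hN ∨ ∃ k, 1 ≤ k ∧ 2 * k < N ∧ g ∈ pairFns hN k}

def actionFns : Set (PhaseSpace N → ℝ) :=
  {f | (∃ k, 1 ≤ k ∧ 2 * k < N ∧ f = aH N hN k) ∨ f = aHalf N hN ∨ f = aNf N hN}

theorem hopfGenerators_subset_poissonCommutant (heven : Even N) {f : PhaseSpace N → ℝ}
    (hf : f ∈ actionFns hN) : hopfGenerators hN ⊆ poissonCommutant f := by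
  have h2 := Nat.even_iff.1 heven
  intro g hg
  have hgd : Differentiable ℝ g := by
    rcases hg with rfl | rfl | ⟨m, -, -, hg⟩
    exacts [differentiable_aHalf hN, differentiable_aNf hN, differentiable_of_mem_pairFns hN m hg]
  refine ⟨hgd, fun x => ?_⟩
  rcases hf with ⟨k, hk1, hk2, rfl⟩ | rfl | rfl <;>
    rcases hg with rfl | rfl | ⟨m, hm1, hm2, hg⟩
  · exact pb_eq_zero_of_disjoint_modes hN (dependsOnSites_of_mem_pairFns hN k
      (aH_mem_pairFns hN k)) (dependsOnSites_aHalf hN) (by simp; omega) (by fun_prop) hgd x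
  · exact pb_eq_zero_of_disjoint_modes hN (dependsOnSites_of_mem_pairFns hN k
      (aH_mem_pairFns hN k)) (dependsOnSites_aNf hN) (by simp; omega) (by fun_prop) hgd x
  · rcases eq_or_ne k m with rfl | hkm
    · exact pb_aH_of_mem_pairFns hN k hg
    · exact pb_eq_zero_of_mem_pairFns hN (aH_mem_pairFns hN k) hg
        ⟨hk1, hk2⟩ ⟨hm1, hm2⟩ hkm x
  · exact pb_self _ x
  · exact pb_eq_zero_of_disjoint_modes hN (dependsOnSites_aHalf hN) (dependsOnSites_aNf hN)
      (by simp; omega) (by fun_prop) hgd x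
  · exact pb_eq_zero_of_disjoint_modes hN (dependsOnSites_aHalf hN)
      (dependsOnSites_of_mem_pairFns hN m hg) (by simp; omega) (by fun_prop) hgd x
  · exact pb_eq_zero_of_disjoint_modes hN (dependsOnSites_aNf hN) (dependsOnSites_aHalf hN)
      (by simp; omega) (by fun_prop) hgd x
  · exact pb_self _ x
  · exact pb_eq_zero_of_disjoint_modes hN (dependsOnSites_aNf hN)
      (dependsOnSites_of_mem_pairFns hN m hg) (by simp; omega) (by fun_prop) hgd x

theorem Kquart_eq (k : ℕ) :
    Kquart N hN k =
      (3 / (omg N k * omg N (N / 2 - k))) •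
          (cH N hN k * cH N hN (N / 2 - k) - dH N hN k * dH N hN (N / 2 - k))
        - (3 / 4 / omg N k ^ 2) • bH N hN k ^ 2
        - (3 / 4 / omg N (N / 2 - k) ^ 2) • bH N hN (N / 2 - k) ^ 2 := by
  funext x
  simp only [Kquart, Pi.sub_apply, Pi.smul_apply, Pi.mul_apply, Pi.pow_apply, smul_eq_mul]
  ring

theorem Kquart_mem_adjoin {S : Set (PhaseSpace N → ℝ)} {k : ℕ} (hk : pairFns hN k ⊆ S)
    (hk' : pairFns hN (N / 2 - k) ⊆ S) : Kquart N hN k ∈ Algebra.adjoin ℝ S := by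
  have h := fun g (hg : g ∈ pairFns hN k) => Algebra.subset_adjoin (R := ℝ) (hk hg)
  have h' := fun g (hg : g ∈ pairFns hN (N / 2 - k)) =>
    Algebra.subset_adjoin (R := ℝ) (hk' hg)
  rw [Kquart_eq]
  exact sub_mem (sub_mem (Subalgebra.smul_mem _ (sub_mem
    (mul_mem (h _ (cH_mem_pairFns hN k)) (h' _ (cH_mem_pairFns hN _)))
    (mul_mem (h _ (dH_mem_pairFns hN k)) (h' _ (dH_mem_pairFns hN _)))) _)
    (Subalgebra.smul_mem _ (pow_mem (h _ (bH_mem_pairFns hN k)) 2) _))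
    (Subalgebra.smul_mem _ (pow_mem (h' _ (bH_mem_pairFns hN _)) 2) _)

theorem evenFam_subset_adjoin_hopfGenerators :
    evenFam N hN ⊆ Algebra.adjoin ℝ (hopfGenerators hN) := by
  have hpair : ∀ k, 1 ≤ k → 2 * k < N → pairFns hN k ⊆ hopfGenerators hN :=
    fun k hk1 hk2 g hg => Or.inr (Or.inr ⟨k, hk1, hk2, hg⟩)
  rintro f (⟨k, hk1, hk2, rfl⟩ | rfl | rfl | ⟨k, hk1, hk2, rfl⟩ | ⟨h4, rfl⟩ |
    ⟨k, hk1, hk2, rfl⟩)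
  · exact Algebra.subset_adjoin (hpair k hk1 hk2 (aH_mem_pairFns hN k))
  · exact Algebra.subset_adjoin (Or.inl rfl)
  · exact Algebra.subset_adjoin (Or.inr (Or.inl rfl))
  · exact sub_mem (Algebra.subset_adjoin (hpair k hk1 (by omega) (bH_mem_pairFns hN k)))
      (Algebra.subset_adjoin (hpair (N / 2 - k) (by omega) (by omega) (bH_mem_pairFns hN _)))
  · exact Algebra.subset_adjoin (hpair (N / 4) (by omega) (by omega) (cH_mem_pairFns hN _))
  · exact Kquart_mem_adjoin hN (hpair k hk1 (by omega)) (hpair (N / 2 - k) (by omega) (by omega))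

theorem pb_eq_zero_of_mem_actionFns (heven : Even N) {f g : PhaseSpace N → ℝ}
    (hf : f ∈ actionFns hN) (hg : g ∈ evenFam N hN) (x : PhaseSpace N) : pb f g x = 0 :=
  ((Algebra.adjoin_le (hopfGenerators_subset_poissonCommutant hN heven hf))
    (evenFam_subset_adjoin_hopfGenerators hN hg)).2 x

theorem dependsOnSites_bDiff (k : ℕ) :
    DependsOnSites (fun y => bH N hN k y - bH N hN (N / 2 - k) y)
      (co N hN '' ({k, N - k} ∪ {N / 2 - k, N - (N / 2 - k)})) := by
  intro x y h
  rw [Set.image_union] at h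
  have h₁ := dependsOnSites_of_mem_pairFns hN k (bH_mem_pairFns hN k) fun i hi => h i (Or.inl hi)
  have h₂ := dependsOnSites_of_mem_pairFns hN (N / 2 - k) (bH_mem_pairFns hN _) fun i hi =>
    h i (Or.inr hi)
  simp only [h₁, h₂]

/-- The flows of `b_k` and `b_{N/2-k}` rotate `c_k + i d_k` and `c_{N/2-k} + i d_{N/2-k}` at the
same speed, so the flow of their difference fixes the product of the two, whose real part is
`c_k c_{N/2-k} - d_k d_{N/2-k}`, as well as `b_k` and `b_{N/2-k}`. -/
theorem pb_bDiff_Kquart (heven : Even N) {k : ℕ} (hk1 : 1 ≤ k) (hk2 : 4 * k < N)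
    (x : PhaseSpace N) :
    pb (fun y => bH N hN k y - bH N hN (N / 2 - k) y) (Kquart N hN k) x = 0 := by
  have h2 := Nat.even_iff.1 heven
  have hk := co_ne_co_sub hN hk1 (by omega : 2 * k < N)
  have hk' := co_ne_co_sub hN (by omega : 1 ≤ N / 2 - k) (by omega : 2 * (N / 2 - k) < N)
  have hk₁ : 1 ≤ k ∧ 2 * k < N := ⟨hk1, by omega⟩
  have hk₂ : 1 ≤ N / 2 - k ∧ 2 * (N / 2 - k) < N := ⟨by omega, by omega⟩
  have hcross : ∀ {g h}, g ∈ pairFns hN k → h ∈ pairFns hN (N / 2 - k) →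
      pb g h x = 0 ∧ pb h g x = 0 := fun hg hh =>
    ⟨pb_eq_zero_of_mem_pairFns hN hg hh hk₁ hk₂ (by omega) x,
      pb_eq_zero_of_mem_pairFns hN hh hg hk₂ hk₁ (by omega) x⟩
  unfold Kquart
  simp (disch := fun_prop) only [pb_sub_left, pb_sub_right, pb_div_const_right, pb_const_mul_right,
    pb_add_right, pb_mul_right, pb_sq_right, pb_self, pb_bH_cH hN k hk, pb_bH_dH hN k hk,
    pb_bH_cH hN _ hk', pb_bH_dH hN _ hk',
    (hcross (bH_mem_pairFns hN k) (bH_mem_pairFns hN _)).1,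
    (hcross (bH_mem_pairFns hN k) (cH_mem_pairFns hN _)).1,
    (hcross (bH_mem_pairFns hN k) (dH_mem_pairFns hN _)).1,
    (hcross (bH_mem_pairFns hN k) (bH_mem_pairFns hN _)).2,
    (hcross (cH_mem_pairFns hN k) (bH_mem_pairFns hN _)).2,
    (hcross (dH_mem_pairFns hN k) (bH_mem_pairFns hN _)).2]
  ring

def resonantFns : Set (PhaseSpace N → ℝ) :=
  {f | (∃ k, 1 ≤ k ∧ 4 * k < N ∧ f = fun x => bH N hN k x - bH N hN (N / 2 - k) x) ∨
    (N % 4 = 0 ∧ f = cH N hN (N / 4)) ∨ (∃ k, 1 ≤ k ∧ 4 * k < N ∧ f = Kquart N hN k)}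

theorem evenFam_eq_union : evenFam N hN = actionFns hN ∪ resonantFns hN := by
  ext f
  simp only [evenFam, actionFns, resonantFns, Set.mem_union, Set.mem_ofPred_eq, or_assoc]

theorem pb_eq_zero_of_mem_resonantFns (heven : Even N) {f g : PhaseSpace N → ℝ}
    (hf : f ∈ resonantFns hN) (hg : g ∈ resonantFns hN) (x : PhaseSpace N) : pb f g x = 0 := by
  have h2 := Nat.even_iff.1 heven
  have hB := dependsOnSites_bDiff hN
  have hC := dependsOnSites_of_mem_pairFns hN (N / 4) (cH_mem_pairFns hN _)
  have hK := dependsOnSites_Kquart hN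
  rcases hf with ⟨k, hk1, hk2, rfl⟩ | ⟨h4, rfl⟩ | ⟨k, hk1, hk2, rfl⟩ <;>
    rcases hg with ⟨m, hm1, hm2, rfl⟩ | ⟨h4, rfl⟩ | ⟨m, hm1, hm2, rfl⟩
  · rcases eq_or_ne k m with rfl | hkm
    · exact pb_self _ x
    · exact pb_eq_zero_of_disjoint_modes hN (hB k) (hB m) (by simp; omega) (by fun_prop)
        (by fun_prop) x
  · exact pb_eq_zero_of_disjoint_modes hN (hB k) hC (by simp; omega) (by fun_prop) (by fun_prop) x
  · rcases eq_or_ne k m with rfl | hkm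
    · exact pb_bDiff_Kquart hN heven hk1 hk2 x
    · exact pb_eq_zero_of_disjoint_modes hN (hB k) (hK m) (by simp; omega) (by fun_prop)
        (by fun_prop) x
  · exact pb_eq_zero_of_disjoint_modes hN hC (hB m) (by simp; omega) (by fun_prop) (by fun_prop) x
  · exact pb_self _ x
  · exact pb_eq_zero_of_disjoint_modes hN hC (hK m) (by simp; omega) (by fun_prop) (by fun_prop) x
  · rcases eq_or_ne k m with rfl | hkm
    · rw [pb_antisymm, pb_bDiff_Kquart hN heven hk1 hk2 x, neg_zero]
    · exact pb_eq_zero_of_disjoint_modes hN (hK k) (hB m) (by simp; omega) (by fun_prop)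
        (by fun_prop) x
  · exact pb_eq_zero_of_disjoint_modes hN (hK k) hC (by simp; omega) (by fun_prop) (by fun_prop) x
  · rcases eq_or_ne k m with rfl | hkm
    · exact pb_self _ x
    · exact pb_eq_zero_of_disjoint_modes hN (hK k) (hK m) (by simp; omega) (by fun_prop)
        (by fun_prop) x

theorem pb_eq_zero_of_mem_evenFam (heven : Even N) {f g : PhaseSpace N → ℝ}
    (hf : f ∈ evenFam N hN) (hg : g ∈ evenFam N hN) (x : PhaseSpace N) : pb f g x = 0 := by
  rcases (evenFam_eq_union hN ▸ hf) with hfa | hfr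
  · exact pb_eq_zero_of_mem_actionFns hN heven hfa hg x
  rcases (evenFam_eq_union hN ▸ hg) with hga | hgr
  · rw [pb_antisymm, pb_eq_zero_of_mem_actionFns hN heven hga hf x, neg_zero]
  · exact pb_eq_zero_of_mem_resonantFns hN heven hfr hgr x

theorem H2KG_eq (heven : Even N) :
    H2KG N hN = ∑ k ∈ Ico 1 (N / 2), omg N k • aH N hN k
      + omg N (N / 2) • aHalf N hN + omg N N • aNf N hN := by
  have h2 := Nat.even_iff.1 heven
  funext x
  simp only [H2KG, Pi.add_apply, Finset.sum_apply, Pi.smul_apply, smul_eq_mul]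
  rw [← Ico_insert_right (by omega : 1 ≤ N), sum_insert right_notMem_Ico, add_comm,
    sum_Ico_one_fold _ hN, if_pos heven, show (N + 1) / 2 = N / 2 by omega]
  have hpair : ∀ k ∈ Ico 1 (N / 2), omg N k / 2 * (x.1 (co N hN k) ^ 2 + x.2 (co N hN k) ^ 2)
      + omg N (N - k) / 2 * (x.1 (co N hN (N - k)) ^ 2 + x.2 (co N hN (N - k)) ^ 2)
      = omg N k * aH N hN k x := fun k hk => by
    rw [omg_sub (by simp at hk; omega), aH]; ring
  rw [sum_congr rfl hpair, aHalf, aNf]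
  ring

theorem H4even_eq (heven : Even N) (β : ℝ) :
    H4even N hN β = (β / (2 * N)) •
      ((3 / 2 / omg N (N / 2) ^ 2) • aHalf N hN ^ 2 + (3 / 2 / omg N N ^ 2) • aNf N hN ^ 2
        + (6 / (omg N (N / 2) * omg N N)) • (aHalf N hN * aNf N hN)
        + ((6 / omg N (N / 2)) • aHalf N hN + (6 / omg N N) • aNf N hN) *
            ∑ k ∈ Ico 1 (N / 2), (omg N k)⁻¹ • aH N hN k
        + (9 / 4 : ℝ) • ∑ k ∈ Ico 1 (N / 2), (omg N k ^ 2)⁻¹ • aH N hN k ^ 2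
        + (6 : ℝ) • ∑ k ∈ Ico 1 (N / 2), ∑ l ∈ Ico (k + 1) (N / 2),
            (omg N k * omg N l)⁻¹ • (aH N hN k * aH N hN l)
        + ∑ k ∈ (Ico 1 (N / 2)).filter (fun k => 4 * k < N), Kquart N hN k
        + if N % 4 = 0 then
            (3 / 4 / omg N (N / 4) ^ 2) •
              ((2 : ℝ) • cH N hN (N / 4) ^ 2 - aH N hN (N / 4) ^ 2)
          else 0) := by
  have h2 := Nat.even_iff.1 heven
  funext x
  set F := (Ico 1 (N / 2)).filter (fun k => 4 * k < N) with hF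
  have hb : ∑ k ∈ Ico 1 (N / 2), bH N hN k x ^ 2 / omg N k ^ 2 =
      ∑ k ∈ F, (bH N hN k x ^ 2 / omg N k ^ 2
        + bH N hN (N / 2 - k) x ^ 2 / omg N (N / 2 - k) ^ 2)
      + if N % 4 = 0 then bH N hN (N / 4) x ^ 2 / omg N (N / 4) ^ 2 else 0 := by
    rw [sum_Ico_one_fold _ (by omega : 0 < N / 2),
      show F = Ico 1 ((N / 2 + 1) / 2) by ext k; simp [hF]; omega,
      show N / 2 / 2 = N / 4 by omega]
    congr 1
    exact if_congr (by rw [Nat.even_iff]; omega) rfl rfl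
  have hK : ∑ k ∈ F, Kquart N hN k x =
      3 * ∑ k ∈ F, (cH N hN k x * cH N hN (N / 2 - k) x - dH N hN k x * dH N hN (N / 2 - k) x)
        / (omg N k * omg N (N / 2 - k))
      - 3 / 4 * ∑ k ∈ F, (bH N hN k x ^ 2 / omg N k ^ 2
        + bH N hN (N / 2 - k) x ^ 2 / omg N (N / 2 - k) ^ 2) := by
    simp only [Kquart, sum_sub_distrib, mul_sum, mul_div_assoc]
  simp only [H4even, Pi.add_apply, Pi.smul_apply, Pi.mul_apply, Pi.pow_apply, Finset.sum_apply,
    smul_eq_mul, hK]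
  have hA1 : ∑ k ∈ Ico 1 (N / 2), aH N hN k x / omg N k
      = ∑ k ∈ Ico 1 (N / 2), (omg N k)⁻¹ * aH N hN k x :=
    sum_congr rfl fun _ _ => div_eq_inv_mul _ _
  have hA2 : ∑ k ∈ Ico 1 (N / 2), (3 * aH N hN k x ^ 2 - bH N hN k x ^ 2) / omg N k ^ 2
      = 3 * ∑ k ∈ Ico 1 (N / 2), (omg N k ^ 2)⁻¹ * aH N hN k x ^ 2
        - ∑ k ∈ Ico 1 (N / 2), bH N hN k x ^ 2 / omg N k ^ 2 := by
    rw [mul_sum, ← sum_sub_distrib]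
    exact sum_congr rfl fun _ _ => by ring
  have hA3 : ∑ k ∈ Ico 1 (N / 2), ∑ l ∈ Ico (k + 1) (N / 2),
        aH N hN k x * aH N hN l x / (omg N k * omg N l)
      = ∑ k ∈ Ico 1 (N / 2), ∑ l ∈ Ico (k + 1) (N / 2),
        (omg N k * omg N l)⁻¹ * (aH N hN k x * aH N hN l x) :=
    sum_congr rfl fun _ _ => sum_congr rfl fun _ _ => div_eq_inv_mul _ _
  rw [hA1, hA2, hA3, hb]
  split_ifs
  · simp only [Pi.sub_apply, Pi.smul_apply, Pi.pow_apply, smul_eq_mul]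
    linear_combination (β / (2 * N) * (3 / 4 / omg N (N / 4) ^ 2)) * aH_sq hN (N / 4) (x := x)
  · simp only [Pi.zero_apply]
    ring

theorem H2KG_add_H4even_mem_adjoin (heven : Even N) (β : ℝ) :
    H2KG N hN + H4even N hN β ∈ Algebra.adjoin ℝ (evenFam N hN) := by
  have h2 := Nat.even_iff.1 heven
  set S := Algebra.adjoin ℝ (evenFam N hN)
  have hA : ∀ k ∈ Ico 1 (N / 2), aH N hN k ∈ S := fun k hk =>
    Algebra.subset_adjoin (Or.inl ⟨k, by simp at hk; omega, by simp at hk; omega, rfl⟩)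
  have hHalf : aHalf N hN ∈ S := Algebra.subset_adjoin (Or.inr (Or.inl rfl))
  have hAN : aNf N hN ∈ S := Algebra.subset_adjoin (Or.inr (Or.inr (Or.inl rfl)))
  have hK : ∀ k ∈ (Ico 1 (N / 2)).filter (fun k => 4 * k < N), Kquart N hN k ∈ S :=
    fun k hk => Algebra.subset_adjoin (Or.inr (Or.inr (Or.inr (Or.inr (Or.inr
      ⟨k, by simp at hk; omega, by simp at hk; omega, rfl⟩)))))
  refine add_mem ?_ ?_
  · rw [H2KG_eq hN heven]
    exact add_mem (add_mem (sum_mem fun k hk => S.smul_mem (hA k hk) _) (S.smul_mem hHalf _))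
      (S.smul_mem hAN _)
  rw [H4even_eq hN heven β]
  refine S.smul_mem (add_mem (add_mem (add_mem (add_mem (add_mem (add_mem (add_mem
    (S.smul_mem (pow_mem hHalf 2) _) (S.smul_mem (pow_mem hAN 2) _))
    (S.smul_mem (mul_mem hHalf hAN) _))
    (mul_mem (add_mem (S.smul_mem hHalf _) (S.smul_mem hAN _))
      (sum_mem fun k hk => S.smul_mem (hA k hk) _)))
    (S.smul_mem (sum_mem fun k hk => S.smul_mem (pow_mem (hA k hk) 2) _) _))
    (S.smul_mem (sum_mem fun k hk => sum_mem fun l hl =>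
      S.smul_mem (mul_mem (hA k hk) (hA l (by simp at hk hl ⊢; omega))) _) _))
    (sum_mem hK)) ?_) _
  split_ifs with h4
  · have hC : cH N hN (N / 4) ∈ S :=
      Algebra.subset_adjoin (Or.inr (Or.inr (Or.inr (Or.inr (Or.inl ⟨h4, rfl⟩)))))
    exact S.smul_mem (sub_mem (S.smul_mem (pow_mem hC 2) _)
      (pow_mem (hA (N / 4) (by simp; omega)) 2)) _
  · exact zero_mem S

theorem differentiable_of_mem_evenFam {f : PhaseSpace N → ℝ} (hf : f ∈ evenFam N hN) :
    Differentiable ℝ f := by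
  rcases hf with ⟨k, -, -, rfl⟩ | rfl | rfl | ⟨k, -, -, rfl⟩ | ⟨-, rfl⟩ | ⟨k, -, -, rfl⟩ <;>
    fun_prop

end KGLattice

open KGLattice in
theorem KG_even_normal_form_integrable_general (N : ℕ) (heven : Even N)
    (hN0 : 0 < N) (β : ℝ) :
    (∀ f ∈ evenFam N hN0, ∀ g ∈ evenFam N hN0, ∀ x, pb f g x = 0) ∧
    (∀ f ∈ evenFam N hN0, ∀ x,
      pb f (fun y => H2KG N hN0 y + H4even N hN0 β y) x = 0) := by
  have hcomm : ∀ f ∈ evenFam N hN0, ∀ g ∈ evenFam N hN0, ∀ x, pb f g x = 0 :=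
    fun f hf g hg x => pb_eq_zero_of_mem_evenFam hN0 heven hf hg x
  refine ⟨hcomm, fun f hf x => ?_⟩
  have hle : Algebra.adjoin ℝ (evenFam N hN0) ≤ poissonCommutant f :=
    Algebra.adjoin_le fun g hg => ⟨differentiable_of_mem_evenFam hN0 hg, hcomm f hf g hg⟩
  exact (hle (H2KG_add_H4even_mem_adjoin hN0 heven β)).2 x

/-- For `N ≥ 4` even, the functions `a_k` (`1 ≤ k < N/2`), `a_{N/2}`,
`a_N`, `b_k − b_{N/2−k}` (`1 ≤ k < N/4`), `c_{N/4}` (if `4 ∣ N`), and `K_k`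
(`1 ≤ k < N/4`) pairwise Poisson-commute and each Poisson-commutes with the truncated
normal form `H̄ = H₂ + H̄₄` of the periodic KG lattice. -/
theorem KG_even_normal_form_integrable (N : ℕ) (hN : 4 ≤ N) (heven : Even N)
    (hN0 : 0 < N) (β : ℝ) :
    (∀ f ∈ evenFam N hN0, ∀ g ∈ evenFam N hN0, ∀ x, pb f g x = 0) ∧
    (∀ f ∈ evenFam N hN0, ∀ x,
      pb f (fun y => H2KG N hN0 y + H4even N hN0 β y) x = 0) :=
  KG_even_normal_form_integrable_general N heven hN0 β

end
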